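/- Let c₀ denote the real Banach space of real sequences converging to 0, equipped with the supremum norm. For every x ∈ B_{c₀}, one has Dc(x) = 1. -/

import Mathlib

open Set Metric Filter

variable {X : Type*} [NormedAddCommGroup X] [NormedSpace ℝ X]

/-- The slice `S(f, δ)` of the closed unit ball of `X`, determined by a norm-one functional
`f` and `δ > 0` (the norm and positivity conditions are imposed at use sites). -/
def unitBallSlice (f : X →L[ℝ] ℝ) (δ : ℝ) : Set X :=
  {y | ‖y‖ ≤ 1 ∧ 1 - δ < f y}

/-- The Daugavet constant of a point: the infimum over all slices of the unit ball of the
supremum of distances from `x` to points of the slice. -/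
noncomputable def Dc (x : X) : ℝ :=
  sInf {r | ∃ (f : X →L[ℝ] ℝ) (δ : ℝ), ‖f‖ = 1 ∧ 0 < δ ∧
    r = sSup ((fun y => ‖x - y‖) '' unitBallSlice f δ)}

/-- The Δ-constant of a point: the infimum over all slices of the unit ball containing `x`
of the supremum of distances from `x` to points of the slice. -/
noncomputable def DeltaC (x : X) : ℝ :=
  sInf {r | ∃ (f : X →L[ℝ] ℝ) (δ : ℝ), ‖f‖ = 1 ∧ 0 < δ ∧ x ∈ unitBallSlice f δ ∧
    r = sSup ((fun y => ‖x - y‖) '' unitBallSlice f δ)}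

/-!
A norm-one functional on `c₀` is summable against the unit vectors, so it is negligible on some
coordinate `n`; resetting the `n`-th coordinate of a point of a slice to `±1`, against the sign of
`x n`, keeps it in the slice and puts it at distance `≥ 1` from `x`. Conversely, off a finite set
`F` the coordinates of `x` are at most `ε`, and on the slice of width `ε / #F` of the functional
averaging the signs of `x` over `F`, every coordinate in `F` is within `ε` of that sign; so the
whole slice lies within `1 + ε` of `x`.
-/

open Topology ZeroAtInfty Finset

theorem unitBallSlice_nonempty {f : X →L[ℝ] ℝ} (hf : ‖f‖ = 1) {δ : ℝ} (hδ : 0 < δ) :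
    (unitBallSlice f δ).Nonempty := by
  obtain ⟨y, hy, hfy⟩ := f.exists_lt_apply_of_lt_opNorm (r := 1 - δ) (by linarith)
  rcases le_or_gt 0 (f y) with hpos | hneg
  · exact ⟨y, hy.le, by rwa [Real.norm_of_nonneg hpos] at hfy⟩
  · exact ⟨-y, by simpa using hy.le, by rwa [Real.norm_of_nonpos hneg.le, ← map_neg] at hfy⟩

theorem bddAbove_norm_sub_image_unitBallSlice (x : X) (f : X →L[ℝ] ℝ) (δ : ℝ) :
    BddAbove ((fun y => ‖x - y‖) '' unitBallSlice f δ) := by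
  refine ⟨‖x‖ + 1, ?_⟩
  rintro - ⟨y, ⟨hy, -⟩, rfl⟩
  linarith [norm_sub_le x y]

theorem Dc_eq_of_forall_unitBallSlice {x : X} {c : ℝ}
    (hlower : ∀ (f : X →L[ℝ] ℝ) (δ : ℝ), ‖f‖ = 1 → 0 < δ →
      ∃ y ∈ unitBallSlice f δ, c ≤ ‖x - y‖)
    (hupper : ∀ ε > 0, ∃ (f : X →L[ℝ] ℝ) (δ : ℝ), ‖f‖ = 1 ∧ 0 < δ ∧
      ∀ y ∈ unitBallSlice f δ, ‖x - y‖ ≤ c + ε) :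
    Dc x = c := by
  obtain ⟨f₁, δ₁, hf₁, hδ₁, -⟩ := hupper 1 one_pos
  refine csInf_eq_of_forall_ge_of_forall_gt_exists_lt ⟨_, f₁, δ₁, hf₁, hδ₁, rfl⟩ ?_ ?_
  · rintro - ⟨f, δ, hf, hδ, rfl⟩
    obtain ⟨y, hy, hcy⟩ := hlower f δ hf hδ
    exact hcy.trans (le_csSup (bddAbove_norm_sub_image_unitBallSlice x f δ) ⟨y, hy, rfl⟩)
  · intro w hw
    obtain ⟨f, δ, hf, hδ, hle⟩ := hupper ((w - c) / 2) (by linarith)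
    refine ⟨_, ⟨f, δ, hf, hδ, rfl⟩, ?_⟩
    calc sSup ((fun y => ‖x - y‖) '' unitBallSlice f δ) ≤ c + (w - c) / 2 :=
          csSup_le ((unitBallSlice_nonempty hf hδ).image _) (forall_mem_image.2 hle)
      _ < w := by linarith

noncomputable def unitSign (a : ℝ) : ℝ := if 0 ≤ a then 1 else -1

theorem abs_unitSign (a : ℝ) : |unitSign a| = 1 := by
  unfold unitSign; split_ifs <;> simp

theorem unitSign_mul_self (a : ℝ) : unitSign a * a = |a| := by
  unfold unitSign; split_ifs with h
  · rw [one_mul, abs_of_nonneg h]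
  · rw [neg_one_mul, abs_of_neg (not_le.1 h)]

theorem one_le_abs_add_unitSign (a : ℝ) : 1 ≤ |a + unitSign a| := by
  unfold unitSign; split_ifs with h
  · exact le_abs.2 (Or.inl (by linarith))
  · exact le_abs.2 (Or.inr (by linarith))

theorem abs_sub_le_of_lt_unitSign_mul {a b ε : ℝ} (ha : |a| ≤ 1) (hb : |b| ≤ 1)
    (h : 1 - ε < unitSign a * b) : |a - b| ≤ 1 + ε := by
  unfold unitSign at h
  rw [abs_le] at ha hb ⊢
  split_ifs at h <;> constructor <;> linarith

theorem Finset.one_sub_lt_of_one_sub_div_lt_average {ι : Type*} {F : Finset ι} {a : ι → ℝ}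
    {ε : ℝ} (ha : ∀ j ∈ F, a j ≤ 1) (h : 1 - ε / #F < (∑ j ∈ F, a j) / #F) {k : ι}
    (hk : k ∈ F) : 1 - ε < a k := by
  have hcard : (0 : ℝ) < #F := by exact_mod_cast F.card_pos.2 ⟨k, hk⟩
  have hsum : ∑ j ∈ F, (1 - a j) < ε := by
    rw [one_sub_div hcard.ne', div_lt_div_iff_of_pos_right hcard] at h
    rw [sum_sub_distrib, sum_const, nsmul_one]
    linarith
  have := F.single_le_sum (f := fun j => 1 - a j) (fun j hj => by linarith [ha j hj]) hk
  linarith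

namespace ZeroAtInftyContinuousMap

section

variable {α : Type*} [TopologicalSpace α]

theorem abs_apply_le_norm (y : C₀(α, ℝ)) (a : α) : |y a| ≤ ‖y‖ := by
  rw [← norm_toBCF_eq_norm]
  exact y.toBCF.norm_coe_le_norm a

theorem norm_le_of_forall_abs_le {y : C₀(α, ℝ)} {c : ℝ} (hc : 0 ≤ c) (h : ∀ a, |y a| ≤ c) :
    ‖y‖ ≤ c := by
  rw [← norm_toBCF_eq_norm]
  exact (BoundedContinuousFunction.norm_le hc).2 h

noncomputable def evalCLM (a : α) : C₀(α, ℝ) →L[ℝ] ℝ :=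
  LinearMap.mkContinuous
    { toFun := fun y => y a, map_add' := fun _ _ => rfl, map_smul' := fun _ _ => rfl } 1
    fun y => by simpa using abs_apply_le_norm y a

@[simp]
theorem evalCLM_apply (a : α) (y : C₀(α, ℝ)) : evalCLM a y = y a := rfl

noncomputable def signAverage (x : C₀(α, ℝ)) (F : Finset α) : C₀(α, ℝ) →L[ℝ] ℝ :=
  (#F : ℝ)⁻¹ • ∑ k ∈ F, unitSign (x k) • evalCLM k

theorem signAverage_apply (x : C₀(α, ℝ)) (F : Finset α) (y : C₀(α, ℝ)) :
    signAverage x F y = (∑ k ∈ F, unitSign (x k) * y k) / #F := by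
  simp [signAverage, div_eq_inv_mul]

theorem norm_sub_le_of_mem_unitBallSlice_signAverage {x : C₀(α, ℝ)} (hx : ‖x‖ ≤ 1) {ε : ℝ}
    (hε : 0 < ε) {F : Finset α} (hsmall : ∀ k ∉ F, |x k| ≤ ε) {y : C₀(α, ℝ)}
    (hy : y ∈ unitBallSlice (signAverage x F) (ε / #F)) : ‖x - y‖ ≤ 1 + ε := by
  obtain ⟨hy, hfy⟩ := hy
  rw [signAverage_apply] at hfy
  have habs : ∀ {z : C₀(α, ℝ)}, ‖z‖ ≤ 1 → ∀ k, |z k| ≤ 1 := fun hz k =>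
    (abs_apply_le_norm _ k).trans hz
  refine norm_le_of_forall_abs_le (by positivity) fun k => ?_
  rw [sub_apply]
  by_cases hk : k ∈ F
  · refine abs_sub_le_of_lt_unitSign_mul (habs hx k) (habs hy k) ?_
    refine one_sub_lt_of_one_sub_div_lt_average (fun j _ => ?_) hfy hk
    exact (le_abs_self _).trans (by rw [abs_mul, abs_unitSign, one_mul]; exact habs hy j)
  · linarith [abs_sub (x k) (y k), hsmall k hk, habs hy k]

end

variable {ι : Type*} [TopologicalSpace ι] [DiscreteTopology ι]

noncomputable def indicator (F : Finset ι) (g : ι → ℝ) : C₀(ι, ℝ) where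
  toFun := (F : Set ι).indicator g
  continuous_toFun := continuous_of_discreteTopology
  zero_at_infty' := by
    rw [cocompact_eq_cofinite]
    refine tendsto_const_nhds.congr' ?_
    filter_upwards [F.finite_toSet.compl_mem_cofinite] with k hk
    exact (Set.indicator_of_notMem hk g).symm

@[simp]
theorem indicator_apply (F : Finset ι) (g : ι → ℝ) (k : ι) :
    indicator F g k = (F : Set ι).indicator g k := rfl

theorem norm_indicator_le {F : Finset ι} {g : ι → ℝ} (hg : ∀ k ∈ F, |g k| ≤ 1) :
    ‖indicator F g‖ ≤ 1 := by
  refine norm_le_of_forall_abs_le zero_le_one fun k => ?_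
  by_cases hk : k ∈ F <;> simp [hk, hg]

theorem indicator_eq_sum (F : Finset ι) (g : ι → ℝ) :
    indicator F g = ∑ k ∈ F, g k • indicator {k} 1 := by
  classical
  ext j
  change _ = evalCLM j _
  simp only [map_sum, map_smul, evalCLM_apply, indicator_apply, smul_eq_mul, coe_singleton,
    Set.indicator_apply, Set.mem_singleton_iff, Pi.one_apply, mul_ite, mul_one, mul_zero, mem_coe]
  rw [sum_ite_eq]

theorem sum_abs_apply_indicator_singleton_le (f : C₀(ι, ℝ) →L[ℝ] ℝ) (F : Finset ι) :
    ∑ k ∈ F, |f (indicator {k} 1)| ≤ ‖f‖ := by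
  set z := indicator F fun k => unitSign (f (indicator {k} 1))
  calc ∑ k ∈ F, |f (indicator {k} 1)| = f z := by
        simp only [z, indicator_eq_sum F, map_sum, map_smul, smul_eq_mul, unitSign_mul_self]
    _ ≤ ‖f‖ * ‖z‖ := (Real.le_norm_self _).trans (f.le_opNorm z)
    _ ≤ ‖f‖ := mul_le_of_le_one_right (norm_nonneg f)
        (norm_indicator_le fun k _ => (abs_unitSign _).le)

theorem tendsto_apply_indicator_singleton (f : C₀(ι, ℝ) →L[ℝ] ℝ) :
    Tendsto (fun k => f (indicator {k} 1)) cofinite (𝓝 0) :=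
  (summable_of_sum_le (fun _ => abs_nonneg _)
    (sum_abs_apply_indicator_singleton_le f)).of_abs.tendsto_cofinite_zero

theorem exists_finset_forall_notMem_abs_le (x : C₀(ι, ℝ)) {ε : ℝ} (hε : 0 < ε) :
    ∃ F : Finset ι, ∀ k ∉ F, |x k| ≤ ε := by
  have hx : Tendsto x cofinite (𝓝 0) := cocompact_eq_cofinite ι ▸ x.zero_at_infty'
  have hfin := eventually_cofinite.1 (hx.eventually (closedBall_mem_nhds 0 hε))
  refine ⟨hfin.toFinset, fun k hk => ?_⟩
  simpa using not_not.1 (mt hfin.mem_toFinset.2 hk)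

theorem exists_mem_unitBallSlice_one_le_norm_sub [Infinite ι] (x : C₀(ι, ℝ))
    {f : C₀(ι, ℝ) →L[ℝ] ℝ} (hf : ‖f‖ = 1) {δ : ℝ} (hδ : 0 < δ) :
    ∃ y ∈ unitBallSlice f δ, 1 ≤ ‖x - y‖ := by
  obtain ⟨y₀, hy₀, hfy₀⟩ := unitBallSlice_nonempty hf (half_pos hδ)
  obtain ⟨n, hn⟩ := ((tendsto_apply_indicator_singleton f).eventually
    (ball_mem_nhds 0 (by positivity : 0 < δ / 4))).exists
  rw [Real.dist_0_eq_abs] at hn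
  set s := -unitSign (x n)
  set y := y₀ + (s - y₀ n) • indicator {n} 1
  have hy_self : y n = s := by simp [y]
  have hy_ne : ∀ k ≠ n, y k = y₀ k := fun k hk => by simp [y, hk]
  refine ⟨y, ⟨norm_le_of_forall_abs_le zero_le_one fun k => ?_, ?_⟩, ?_⟩
  · rcases eq_or_ne k n with rfl | hk
    · rw [hy_self, abs_neg, abs_unitSign]
    · rw [hy_ne k hk]
      exact (abs_apply_le_norm y₀ k).trans hy₀
  · have hcoef : |s - y₀ n| ≤ 2 := by
      linarith [abs_sub s (y₀ n), abs_unitSign (x n), abs_neg (unitSign (x n)),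
        (abs_apply_le_norm y₀ n).trans hy₀]
    have hpert : |(s - y₀ n) * f (indicator {n} 1)| ≤ δ / 2 := by
      rw [abs_mul]; nlinarith [abs_nonneg (s - y₀ n), abs_nonneg (f (indicator {n} 1))]
    have hfy : f y = f y₀ + (s - y₀ n) * f (indicator {n} 1) := by simp [y]
    linarith [neg_abs_le ((s - y₀ n) * f (indicator {n} 1))]
  · calc (1 : ℝ) ≤ |x n + unitSign (x n)| := one_le_abs_add_unitSign _
      _ = |(x - y) n| := by rw [sub_apply, hy_self, sub_neg_eq_add]
      _ ≤ ‖x - y‖ := abs_apply_le_norm _ _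

theorem norm_signAverage (x : C₀(ι, ℝ)) {F : Finset ι} (hF : F.Nonempty) :
    ‖signAverage x F‖ = 1 := by
  have hcard : (0 : ℝ) < #F := by exact_mod_cast hF.card_pos
  set f := signAverage x F
  set z := indicator F fun k => unitSign (x k)
  refine le_antisymm (f.opNorm_le_bound zero_le_one fun y => ?_) ?_
  · rw [signAverage_apply, one_mul, Real.norm_eq_abs, abs_div, abs_of_pos hcard,
      div_le_iff₀ hcard]
    calc |∑ k ∈ F, unitSign (x k) * y k| ≤ ∑ k ∈ F, |unitSign (x k) * y k| :=
          abs_sum_le_sum_abs _ _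
      _ ≤ ∑ _k ∈ F, ‖y‖ := sum_le_sum fun k _ => by
          rw [abs_mul, abs_unitSign, one_mul]; exact abs_apply_le_norm y k
      _ = ‖y‖ * #F := by rw [sum_const, nsmul_eq_mul, mul_comm]
  · have hfz : f z = 1 := by
      rw [signAverage_apply, div_eq_one_iff_eq hcard.ne', ← nsmul_one, ← sum_const]
      refine sum_congr rfl fun k hk => ?_
      rw [indicator_apply, Set.indicator_of_mem (mem_coe.2 hk), ← abs_mul_abs_self,
        abs_unitSign, one_mul]
    calc 1 = f z := hfz.symm
      _ ≤ ‖f‖ * ‖z‖ := (Real.le_norm_self _).trans (f.le_opNorm z)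
      _ ≤ ‖f‖ := mul_le_of_le_one_right (norm_nonneg f)
          (norm_indicator_le fun k _ => (abs_unitSign _).le)

theorem exists_unitBallSlice_norm_sub_le [Nonempty ι] {x : C₀(ι, ℝ)} (hx : ‖x‖ ≤ 1) {ε : ℝ}
    (hε : 0 < ε) :
    ∃ (f : C₀(ι, ℝ) →L[ℝ] ℝ) (δ : ℝ), ‖f‖ = 1 ∧ 0 < δ ∧
      ∀ y ∈ unitBallSlice f δ, ‖x - y‖ ≤ 1 + ε := by
  classical
  obtain ⟨F, hF⟩ := exists_finset_forall_notMem_abs_le x hε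
  set F' := insert (Classical.arbitrary ι) F
  have hsmall : ∀ k ∉ F', |x k| ≤ ε := fun k hk => hF k fun hkF => hk (mem_insert_of_mem hkF)
  exact ⟨signAverage x F', ε / #F', norm_signAverage x (insert_nonempty _ F), by positivity,
    fun _ hy => norm_sub_le_of_mem_unitBallSlice_signAverage hx hε hsmall hy⟩

end ZeroAtInftyContinuousMap

/-- `c₀` is modelled as `C₀(ℕ, ℝ)`: as `ℕ` is discrete, these are the null sequences with the
sup norm. -/
theorem daugavetConstant_c0 (x : ZeroAtInftyContinuousMap ℕ ℝ) (hx : ‖x‖ ≤ 1) :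
    Dc x = 1 :=
  Dc_eq_of_forall_unitBallSlice
    (fun _ _ hf hδ =>
      ZeroAtInftyContinuousMap.exists_mem_unitBallSlice_one_le_norm_sub x hf hδ)
    (fun _ hε => ZeroAtInftyContinuousMap.exists_unitBallSlice_norm_sub_le hx hε)
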